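/- Let I be a finite index set and σ_i, τ_i (i ∈ I), σ, τ be types in 𝕋. If ⋂_{i∈I}(σ_i→τ_i) ≤ σ→τ, then there exists a subset J ⊆ I such that σ ≤ ⋂_{j∈J}σ_j and ⋂_{j∈J}τ_j ≤ τ (empty intersections being taken to be ω). -/

import Mathlib

/-- Intersection and record types `𝕋`. Record types are the types satisfying `IsRec`. -/
inductive Ty where
  | const : Nat → Ty
  | omega : Ty
  | arrow : Ty → Ty → Ty
  | inter : Ty → Ty → Ty
  | empty : Ty
  | fld : Nat → Ty → Ty
  | merge : Ty → Ty → Ty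
deriving DecidableEq

/-- The record types `𝕋_R ⊆ 𝕋`. -/
inductive IsRec : Ty → Prop where
  | empty : IsRec .empty
  | fld (l : Nat) (σ : Ty) : IsRec (.fld l σ)
  | merge {ρ₁ ρ₂ : Ty} : IsRec ρ₁ → IsRec ρ₂ → IsRec (.merge ρ₁ ρ₂)
  | inter {ρ₁ ρ₂ : Ty} : IsRec ρ₁ → IsRec ρ₂ → IsRec (.inter ρ₁ ρ₂)

/-- Subtyping on `𝕋`: the least preorder satisfying the BCD axioms together with
the record and record-merge axioms. -/
inductive TySub : Ty → Ty → Prop where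
  | refl (σ : Ty) : TySub σ σ
  | trans {σ τ υ : Ty} : TySub σ τ → TySub τ υ → TySub σ υ
  | le_omega (σ : Ty) : TySub σ .omega
  | omega_arrow : TySub .omega (.arrow .omega .omega)
  | inter_left (σ τ : Ty) : TySub (.inter σ τ) σ
  | inter_right (σ τ : Ty) : TySub (.inter σ τ) τ
  | le_inter {σ τ₁ τ₂ : Ty} : TySub σ τ₁ → TySub σ τ₂ → TySub σ (.inter τ₁ τ₂)
  | arrow_inter (σ τ₁ τ₂ : Ty) :
      TySub (.inter (.arrow σ τ₁) (.arrow σ τ₂)) (.arrow σ (.inter τ₁ τ₂))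
  | arrow_mono {σ₁ σ₂ τ₁ τ₂ : Ty} : TySub σ₂ σ₁ → TySub τ₁ τ₂ →
      TySub (.arrow σ₁ τ₁) (.arrow σ₂ τ₂)
  | fld_empty (l : Nat) (σ : Ty) : TySub (.fld l σ) .empty
  | fld_inter (l : Nat) (σ τ : Ty) :
      TySub (.inter (.fld l σ) (.fld l τ)) (.fld l (.inter σ τ))
  | fld_mono {σ τ : Ty} (l : Nat) : TySub σ τ → TySub (.fld l σ) (.fld l τ)
  | merge_empty_r {ρ : Ty} : IsRec ρ → TySub (.merge ρ .empty) ρ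
  | merge_empty_r' {ρ : Ty} : IsRec ρ → TySub ρ (.merge ρ .empty)
  | merge_empty_l {ρ : Ty} : IsRec ρ → TySub (.merge .empty ρ) ρ
  | merge_empty_l' {ρ : Ty} : IsRec ρ → TySub ρ (.merge .empty ρ)
  | merge_assoc {ρ₁ ρ₂ ρ₃ : Ty} : IsRec ρ₁ → IsRec ρ₂ → IsRec ρ₃ →
      TySub (.merge (.merge ρ₁ ρ₂) ρ₃) (.merge ρ₁ (.merge ρ₂ ρ₃))
  | merge_assoc' {ρ₁ ρ₂ ρ₃ : Ty} : IsRec ρ₁ → IsRec ρ₂ → IsRec ρ₃ →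
      TySub (.merge ρ₁ (.merge ρ₂ ρ₃)) (.merge (.merge ρ₁ ρ₂) ρ₃)
  | merge_inter {ρ₁ ρ₂ ρ₃ : Ty} : IsRec ρ₁ → IsRec ρ₂ → IsRec ρ₃ →
      TySub (.merge (.inter ρ₁ ρ₂) ρ₃) (.inter (.merge ρ₁ ρ₃) (.merge ρ₂ ρ₃))
  | merge_inter' {ρ₁ ρ₂ ρ₃ : Ty} : IsRec ρ₁ → IsRec ρ₂ → IsRec ρ₃ →
      TySub (.inter (.merge ρ₁ ρ₃) (.merge ρ₂ ρ₃)) (.merge (.inter ρ₁ ρ₂) ρ₃)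
  | fld_absorb {ρ : Ty} (l : Nat) (σ τ : Ty) : IsRec ρ →
      TySub (.merge (.fld l σ) (.inter (.fld l τ) ρ)) (.inter (.fld l τ) ρ)
  | fld_absorb' {ρ : Ty} (l : Nat) (σ τ : Ty) : IsRec ρ →
      TySub (.inter (.fld l τ) ρ) (.merge (.fld l σ) (.inter (.fld l τ) ρ))
  | fld_comm {ρ : Ty} {l l' : Nat} (σ τ : Ty) : l ≠ l' → IsRec ρ →
      TySub (.merge (.fld l σ) (.inter (.fld l' τ) ρ))
          (.inter (.fld l' τ) (.merge (.fld l σ) ρ))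
  | fld_comm' {ρ : Ty} {l l' : Nat} (σ τ : Ty) : l ≠ l' → IsRec ρ →
      TySub (.inter (.fld l' τ) (.merge (.fld l σ) ρ))
          (.merge (.fld l σ) (.inter (.fld l' τ) ρ))
  | merge_mono_l {ρ₁ ρ₂ ρ : Ty} : IsRec ρ₁ → IsRec ρ₂ → IsRec ρ →
      TySub ρ₁ ρ₂ → TySub (.merge ρ₁ ρ) (.merge ρ₂ ρ)
  | merge_congr_r {ρ ρ₁ ρ₂ : Ty} : IsRec ρ → IsRec ρ₁ → IsRec ρ₂ →
      TySub ρ₁ ρ₂ → TySub ρ₂ ρ₁ → TySub (.merge ρ ρ₁) (.merge ρ ρ₂)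

/-- Type equality: mutual subtyping. -/
def TyEq (σ τ : Ty) : Prop := TySub σ τ ∧ TySub τ σ

/-- Finite intersection of a list of types (`ω` for the empty list). -/
def interList : List Ty → Ty
  | [] => .omega
  | [σ] => σ
  | σ :: τ :: rest => .inter σ (interList (τ :: rest))

/-!
Call an arrow `σ → τ` covered by a set of arrows `σᵢ → τᵢ` if `σ ≤ ⋂ σᵢ` and `⋂ τᵢ ≤ τ` for
finitely many of them. Every axiom and rule of `≤` preserves the invariant that each arrow conjunct
of the right-hand side is covered by the arrow conjuncts of the left-hand side: transitivity
because covers compose, and the record axioms because record types have no arrow conjuncts.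
Applied to `⋂ (σᵢ → τᵢ) ≤ σ → τ`, the invariant is the theorem.
-/

theorem interList_le_of_mem {L : List Ty} {x : Ty} (h : x ∈ L) : TySub (interList L) x := by
  fun_induction interList L with
  | case1 => cases h
  | case2 σ => exact List.mem_singleton.mp h ▸ .refl σ
  | case3 σ τ rest ih =>
    rcases List.mem_cons.mp h with rfl | h
    · exact .inter_left _ _
    · exact .trans (.inter_right _ _) (ih h)

theorem le_interList {L : List Ty} {σ : Ty} (h : ∀ x ∈ L, TySub σ x) :
    TySub σ (interList L) := by
  fun_induction interList L with
  | case1 => exact .le_omega σ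
  | case2 τ => exact h τ List.mem_cons_self
  | case3 τ υ rest ih =>
    exact .le_inter (h τ List.mem_cons_self) (ih fun x hx => h x (List.mem_cons_of_mem _ hx))

theorem interList_le_interList {L₁ L₂ : List Ty} (h : L₁ ⊆ L₂) :
    TySub (interList L₂) (interList L₁) :=
  le_interList fun _ hx => interList_le_of_mem (h hx)

theorem inter_le_interList_cons (σ : Ty) (L : List Ty) :
    TySub (.inter σ (interList L)) (interList (σ :: L)) :=
  le_interList fun x hx => by
    rcases List.mem_cons.mp hx with rfl | hx
    · exact .inter_left _ _
    · exact .trans (.inter_right _ _) (interList_le_of_mem hx)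

def arrows : Ty → List (Ty × Ty)
  | .arrow σ τ => [(σ, τ)]
  | .inter σ τ => arrows σ ++ arrows τ
  | _ => []

theorem IsRec.arrows_eq_nil {ρ : Ty} (h : IsRec ρ) : arrows ρ = [] := by
  induction h <;> simp_all [arrows]

theorem arrows_interList_map_arrow :
    ∀ l : List (Ty × Ty), arrows (interList (l.map fun p => .arrow p.1 p.2)) = l
  | [] => rfl
  | [_] => rfl
  | p :: q :: rest => by
    have ih := arrows_interList_map_arrow (q :: rest)
    simp only [List.map_cons] at ih
    simp [interList, arrows, ih]

/-- `σ → τ` is derivable from finitely many arrows `σᵢ → τᵢ` with `P (σᵢ, τᵢ)` by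
`arrow_mono` and `arrow_inter` alone. -/
def Covers (P : Ty × Ty → Prop) (σ τ : Ty) : Prop :=
  ∃ J : List (Ty × Ty), (∀ p ∈ J, P p) ∧
    TySub σ (interList (J.map Prod.fst)) ∧ TySub (interList (J.map Prod.snd)) τ

namespace Covers

variable {P : Ty × Ty → Prop}

theorem of_mem {σ τ : Ty} (h : P (σ, τ)) : Covers P σ τ :=
  ⟨[(σ, τ)], by simpa using h, .refl σ, .refl τ⟩

theorem omega (σ : Ty) : Covers P σ .omega :=
  ⟨[], by simp, .le_omega σ, .refl _⟩

theorem mono {σ σ' τ τ' : Ty} (h : Covers P σ τ) (hσ : TySub σ' σ) (hτ : TySub τ τ') :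
    Covers P σ' τ' :=
  let ⟨J, hJ, hfst, hsnd⟩ := h
  ⟨J, hJ, hσ.trans hfst, hsnd.trans hτ⟩

theorem inter {σ τ₁ τ₂ : Ty} (h₁ : Covers P σ τ₁) (h₂ : Covers P σ τ₂) :
    Covers P σ (.inter τ₁ τ₂) := by
  obtain ⟨J₁, hJ₁, hfst₁, hsnd₁⟩ := h₁
  obtain ⟨J₂, hJ₂, hfst₂, hsnd₂⟩ := h₂
  refine ⟨J₁ ++ J₂, fun p hp => ?_, le_interList fun x hx => ?_, .le_inter ?_ ?_⟩
  · rcases List.mem_append.mp hp with hp | hp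
    exacts [hJ₁ p hp, hJ₂ p hp]
  · rcases List.mem_append.mp (List.map_append ▸ hx) with hx | hx
    exacts [hfst₁.trans (interList_le_of_mem hx), hfst₂.trans (interList_le_of_mem hx)]
  · exact (interList_le_interList (by simp)).trans hsnd₁
  · exact (interList_le_interList (by simp)).trans hsnd₂

theorem of_le_interList_fst {σ : Ty} :
    ∀ {J : List (Ty × Ty)}, (∀ p ∈ J, Covers P p.1 p.2) →
      TySub σ (interList (J.map Prod.fst)) → Covers P σ (interList (J.map Prod.snd))
  | [], _, _ => omega σ
  | p :: J, hJ, hσ => by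
    have hp : Covers P σ p.2 :=
      (hJ p List.mem_cons_self).mono (hσ.trans (interList_le_of_mem (by simp))) (.refl _)
    have hJ' : Covers P σ (interList (J.map Prod.snd)) :=
      of_le_interList_fst (fun q hq => hJ q (List.mem_cons_of_mem _ hq))
        (hσ.trans (interList_le_interList (by simp)))
    exact (hp.inter hJ').mono (.refl σ) (inter_le_interList_cons _ _)

theorem trans {Q : Ty × Ty → Prop} {σ τ : Ty} (h : Covers Q σ τ)
    (hQ : ∀ p, Q p → Covers P p.1 p.2) : Covers P σ τ :=
  let ⟨_, hJ, hfst, hsnd⟩ := h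
  (of_le_interList_fst (fun p hp => hQ p (hJ p hp)) hfst).mono (.refl σ) hsnd

theorem exists_sublist {l : List (Ty × Ty)} {σ τ : Ty} (h : Covers (· ∈ l) σ τ) :
    ∃ l' : List (Ty × Ty), l'.Sublist l ∧
      TySub σ (interList (l'.map Prod.fst)) ∧
      TySub (interList (l'.map Prod.snd)) τ := by
  obtain ⟨J, hJ, hfst, hsnd⟩ := h
  refine ⟨l.filter (· ∈ J), List.filter_sublist, hfst.trans ?_, .trans ?_ hsnd⟩
  · exact interList_le_interList <|
      List.map_subset _ fun _ hp => by simpa using (List.mem_filter.mp hp).2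
  · exact interList_le_interList <| List.map_subset _ fun p hp => by simpa using ⟨hJ p hp, hp⟩

end Covers

theorem TySub.covers_of_mem_arrows {A B : Ty} (h : TySub A B) :
    ∀ p ∈ arrows B, Covers (· ∈ arrows A) p.1 p.2 := by
  induction h with
  | refl => exact fun p hp => .of_mem hp
  | trans _ _ ih₁ ih₂ => exact fun p hp => (ih₂ p hp).trans ih₁
  | omega_arrow => simpa [arrows] using Covers.omega _
  | inter_left => exact fun p hp => .of_mem (List.mem_append_left _ hp)
  | inter_right => exact fun p hp => .of_mem (List.mem_append_right _ hp)
  | le_inter _ _ ih₁ ih₂ =>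
    intro p hp
    rcases List.mem_append.mp hp with hp | hp
    exacts [ih₁ p hp, ih₂ p hp]
  | arrow_inter => simpa [arrows] using (Covers.of_mem (by simp)).inter (.of_mem (by simp))
  | arrow_mono hσ hτ => simpa [arrows] using (Covers.of_mem (by simp)).mono hσ hτ
  | merge_empty_r hρ | merge_empty_l hρ => simp [hρ.arrows_eq_nil]
  | fld_absorb _ _ _ hρ => simp [arrows, hρ.arrows_eq_nil]
  | _ => simp [arrows]

/-- If `⋂_{i∈I}(σ_i→τ_i) ≤ σ→τ` then for some subfamily `J ⊆ I` we have
`σ ≤ ⋂_{j∈J}σ_j` and `⋂_{j∈J}τ_j ≤ τ`. The finite family is given as a list of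
pairs, and the subfamily as a sublist. -/
theorem arrows_inter_le_arrow (l : List (Ty × Ty)) (σ τ : Ty)
    (h : TySub (interList (l.map fun p => .arrow p.1 p.2)) (.arrow σ τ)) :
    ∃ l' : List (Ty × Ty), l'.Sublist l ∧
      TySub σ (interList (l'.map Prod.fst)) ∧
      TySub (interList (l'.map Prod.snd)) τ := by
  have hcov := h.covers_of_mem_arrows (σ, τ) (by simp [arrows])
  rw [arrows_interList_map_arrow] at hcov
  exact hcov.exists_sublist
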